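/- arXiv:quant-ph/9911117 — 2 statements merged into one kernel-verified Lean document; each statement's English description precedes it below -/
import Mathlib

section
/- Let ρ be a density matrix on ℂ^n ⊗ ℂ^n that does not belong to S_k. Then there exists a Hermitian matrix H (indexed by Fin n × Fin n) such that Tr(Hρ) < 0 and Tr(Hσ) ≥ 0 for every σ ∈ S_k. -/
open Matrix BigOperators
open scoped ComplexOrder

/-- The `n × n` matrix `M_ψ` associated to a vector `ψ ∈ ℂ^α ⊗ ℂ^β`,
with entries `(M_ψ)_{ij} = ⟨e_i ⊗ e_j, ψ⟩ = ψ (i, j)`. -/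
def matOfVec {α β : Type*} (ψ : α × β → ℂ) : Matrix α β ℂ :=
  Matrix.of fun i j => ψ (i, j)

/-- The Schmidt rank of a bipartite vector is the rank of its associated matrix. -/
noncomputable def schmidtRank {α β : Type*} [Fintype β] (ψ : α × β → ℂ) : ℕ :=
  (matOfVec ψ).rank

/-- `ψ` is a unit vector. -/
def IsUnitVec {γ : Type*} [Fintype γ] (ψ : γ → ℂ) : Prop :=
  ∑ x, Complex.normSq (ψ x) = 1

/-- The outer product `|ψ⟩⟨ψ|`. -/
def outer {γ : Type*} (ψ : γ → ℂ) : Matrix γ γ ℂ :=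
  Matrix.of fun x y => ψ x * star (ψ y)

/-- `ρ ∈ S_k`: `ρ` admits a decomposition `ρ = ∑ i, p i • |ψ i⟩⟨ψ i|` with `p i ≥ 0`,
`∑ i, p i = 1`, each `ψ i` a unit vector of Schmidt rank at most `k`. -/
def InSchmidtClass {α : Type*} [Fintype α] (k : ℕ)
    (ρ : Matrix (α × α) (α × α) ℂ) : Prop :=
  ∃ (m : ℕ) (p : Fin m → ℝ) (ψ : Fin m → α × α → ℂ),
    (∀ i, 0 ≤ p i) ∧ (∑ i, p i) = 1 ∧
    (∀ i, IsUnitVec (ψ i)) ∧ (∀ i, schmidtRank (ψ i) ≤ k) ∧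
    ρ = ∑ i, (p i : ℂ) • outer (ψ i)

/-- The map `1 ⊗ Λ`, applying `Λ` to each block of a matrix indexed by `γ × Fin n`. -/
def blockMap {γ : Type*} {n m : ℕ}
    (Λ : Matrix (Fin n) (Fin n) ℂ → Matrix (Fin m) (Fin m) ℂ)
    (X : Matrix (γ × Fin n) (γ × Fin n) ℂ) : Matrix (γ × Fin m) (γ × Fin m) ℂ :=
  Matrix.of fun a b => Λ (Matrix.of fun s t => X (a.1, s) (b.1, t)) a.2 b.2

/-- `Λ` is Hermiticity-preserving: `Λ(X†) = Λ(X)†`. -/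
def HermPreserving {n m : ℕ}
    (Λ : Matrix (Fin n) (Fin n) ℂ → Matrix (Fin m) (Fin m) ℂ) : Prop :=
  ∀ X, Λ Xᴴ = (Λ X)ᴴ

/-- `Λ` is `k`-positive: `(1 ⊗ Λ)(|ψ⟩⟨ψ|)` is positive semidefinite for every
unit vector `ψ ∈ ℂ^N ⊗ ℂ^N` of Schmidt rank at most `k`. -/
def kPositive {N : ℕ} (k : ℕ)
    (Λ : Matrix (Fin N) (Fin N) ℂ → Matrix (Fin N) (Fin N) ℂ) : Prop :=
  ∀ ψ : Fin N × Fin N → ℂ, IsUnitVec ψ → schmidtRank ψ ≤ k →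
    (blockMap Λ (outer ψ)).PosSemidef

/-!
`S_k` is the convex hull of the rank-one projectors `|ψ⟩⟨ψ|` onto unit vectors of Schmidt rank at
most `k`. These form a compact set, since `rank ≤ k` is a closed condition, and in finite dimension
Carathéodory's theorem makes the convex hull of a compact set compact. Hahn–Banach then separates
`ρ` from `S_k` by a real functional `f` and a level `u`. Writing `f X = Re Tr(H₀ X)` on Hermitian
`X` with `H₀` Hermitian, the matrix `H = H₀ - u • 1` works, because `ρ` and every `σ ∈ S_k` are
Hermitian of trace one.
-/

-- `Matrix` is a type synonym, so `Pi.locallyConvexSpace` is not found through it.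
instance Matrix.locallyConvexSpace {m n 𝕜 E : Type*} [Semiring 𝕜] [PartialOrder 𝕜]
    [AddCommMonoid E] [Module 𝕜 E] [TopologicalSpace E] [LocallyConvexSpace 𝕜 E] :
    LocallyConvexSpace 𝕜 (Matrix m n E) :=
  Pi.locallyConvexSpace

theorem Function.extend_const_mem {α β γ : Type*} {f : α → β} {g : α → γ} {g₀ : γ}
    {s : Set γ} (hg : ∀ a, g a ∈ s) (hg₀ : g₀ ∈ s) (b : β) :
    Function.extend f g (fun _ => g₀) b ∈ s := by
  classical
  rw [Function.extend_def]
  split_ifs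
  exacts [hg _, hg₀]

theorem Function.Injective.sum_extend₂ {ι κ α β M : Type*} [Fintype ι] [Fintype κ]
    [AddCommMonoid M] {e : ι → κ} (he : e.Injective) (F : α → β → M) (a : ι → α) (b : ι → β)
    {a₀ : α} (b₀ : β) (hF : ∀ y, F a₀ y = 0) :
    ∑ j, F (Function.extend e a (fun _ => a₀) j) (Function.extend e b (fun _ => b₀) j) =
      ∑ i, F (a i) (b i) := by
  refine (Fintype.sum_of_injective e he _ _ (fun j hj => ?_) fun i => ?_).symm
  · rw [Function.extend_apply' _ _ _ (by simpa using hj), hF]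
  · rw [he.extend_apply, he.extend_apply]

section ConvexHull

variable {E : Type*} [AddCommGroup E] [Module ℝ E] [FiniteDimensional ℝ E]

/-- Carathéodory's theorem with a fixed number of points: a shorter convex combination is padded
with points of weight zero. -/
theorem convexHull_eq_image_stdSimplex {s : Set E} (hs : s.Nonempty) :
    convexHull ℝ s =
      (fun q : (Fin (Module.finrank ℝ E + 1) → ℝ) × (Fin (Module.finrank ℝ E + 1) → E) =>
        ∑ i, q.1 i • q.2 i) '' (stdSimplex ℝ _ ×ˢ Set.univ.pi fun _ => s) := by
  classical
  refine subset_antisymm (fun x hx => ?_) ?_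
  · obtain ⟨x₀, hx₀⟩ := hs
    obtain ⟨ι, _, z, w, hzs, hz, hw, hw₁, rfl⟩ := eq_pos_convex_span_of_mem_convexHull hx
    have hcard : Fintype.card ι ≤ Fintype.card (Fin (Module.finrank ℝ E + 1)) := by
      simpa using hz.card_le_finrank_succ.trans
        (Nat.succ_le_succ (Submodule.finrank_le _))
    obtain ⟨e⟩ := Function.Embedding.nonempty_of_card_le hcard
    have hw₀ : ∀ j, Function.extend e w (fun _ => 0) j ∈ Set.Ici 0 :=
      Function.extend_const_mem (fun i => (hw i).le) Set.self_mem_Ici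
    refine ⟨(Function.extend e w (fun _ => 0), Function.extend e z fun _ => x₀),
      ⟨⟨hw₀, ?_⟩, fun j _ => Function.extend_const_mem (fun i => hzs ⟨i, rfl⟩) hx₀ j⟩, ?_⟩
    · exact (e.injective.sum_extend₂ (fun a _ => a) w z x₀ fun _ => rfl).trans hw₁
    · exact e.injective.sum_extend₂ (· • ·) w z x₀ (zero_smul ℝ)
  · rintro _ ⟨q, ⟨hw, hz⟩, rfl⟩
    exact (convex_convexHull ℝ s).sum_mem (fun i _ => hw.1 i) hw.2
      fun i _ => subset_convexHull ℝ s (hz i (Set.mem_univ i))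

theorem IsCompact.convexHull_of_finiteDimensional [TopologicalSpace E] [ContinuousAdd E]
    [ContinuousSMul ℝ E] {s : Set E} (hs : IsCompact s) :
    IsCompact (convexHull ℝ s) := by
  rcases s.eq_empty_or_nonempty with rfl | hne
  · simp
  rw [convexHull_eq_image_stdSimplex hne]
  exact ((isCompact_stdSimplex ℝ _).prod (isCompact_univ_pi fun _ => hs)).image (by fun_prop)

end ConvexHull

theorem Matrix.isClosed_setOf_rank_le {m n 𝕜 : Type*} [Fintype m] [Fintype n]
    [NontriviallyNormedField 𝕜] [CompleteSpace 𝕜] (k : ℕ) :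
    IsClosed {M : Matrix m n 𝕜 | M.rank ≤ k} := by
  classical
  let L : Matrix m n 𝕜 ≃ₗ[𝕜] (n → 𝕜) →L[𝕜] (m → 𝕜) :=
    Matrix.toLin'.trans LinearMap.toContinuousLinearMap
  have hrank (M : Matrix m n 𝕜) : (L M : (n → 𝕜) →ₗ[𝕜] m → 𝕜).rank = M.rank :=
    (Module.finrank_eq_rank _ _).symm
  have hL : {M : Matrix m n 𝕜 | M.rank ≤ k} =
      L ⁻¹' {f | ((k + 1 : ℕ) : Cardinal) ≤ (f : (n → 𝕜) →ₗ[𝕜] m → 𝕜).rank}ᶜ := by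
    ext M
    simp only [Set.mem_ofPred_eq, Set.mem_preimage, Set.mem_compl_iff, hrank, Nat.cast_le,
      not_le, Nat.lt_succ_iff]
  rw [hL]
  exact (isOpen_setOfPred_nat_le_rank (k + 1)).isClosed_compl.preimage
    L.toLinearMap.continuous_of_finiteDimensional

theorem Matrix.IsHermitian.im_trace_mul_eq_zero {ι : Type*} [Fintype ι] {H X : Matrix ι ι ℂ}
    (hH : H.IsHermitian) (hX : X.IsHermitian) : (H * X).trace.im = 0 := by
  rw [← Complex.conj_eq_iff_im, ← Complex.star_def, ← trace_conjTranspose, conjTranspose_mul,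
    hH.eq, hX.eq, trace_mul_comm]

theorem Matrix.exists_trace_mul_eq {ι R : Type*} [Fintype ι] [DecidableEq ι] [CommSemiring R]
    (g : Module.Dual R (Matrix ι ι R)) : ∃ A : Matrix ι ι R, ∀ X, (A * X).trace = g X := by
  refine ⟨Matrix.of fun i j => g (single j i 1), fun X => ?_⟩
  have hsingle : ∀ i j, g (single i j (X i j)) = X i j * g (single i j 1) := fun i j => by
    rw [← smul_eq_mul, ← map_smul, smul_single, smul_eq_mul, mul_one]
  conv_lhs => rw [matrix_eq_sum_single X]
  conv_rhs => rw [matrix_eq_sum_single X]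
  simp [Matrix.mul_sum, trace_sum, trace_mul_single, map_sum, hsingle, mul_comm]

theorem Matrix.exists_isHermitian_re_trace_mul_eq {ι : Type*} [Fintype ι] [DecidableEq ι]
    (f : Module.Dual ℝ (Matrix ι ι ℂ)) :
    ∃ H : Matrix ι ι ℂ, H.IsHermitian ∧ ∀ X, X.IsHermitian → (H * X).trace.re = f X := by
  -- `A + Aᴴ` doubles `Re Tr(A X)` on Hermitian `X`, hence the factor `2⁻¹`.
  obtain ⟨A, hA⟩ := exists_trace_mul_eq (Module.Dual.extendRCLike (𝕜 := ℂ) ((2⁻¹ : ℝ) • f))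
  refine ⟨A + Aᴴ, isHermitian_add_transpose_self A, fun X hX => ?_⟩
  have hAstar : (Aᴴ * X).trace = star (A * X).trace := by
    rw [← trace_conjTranspose, conjTranspose_mul, hX.eq, trace_mul_comm]
  rw [add_mul, trace_add, Complex.add_re, hAstar, Complex.star_def, Complex.conj_re, hA,
    ← RCLike.re_to_complex, Module.Dual.re_extendRCLike_apply]
  simp only [LinearMap.smul_apply, smul_eq_mul]
  ring

section Schmidt

variable {γ : Type*}

theorem outer_eq_vecMulVec (ψ : γ → ℂ) : outer ψ = vecMulVec ψ (star ψ) := rfl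

theorem isHermitian_outer (ψ : γ → ℂ) : (outer ψ).IsHermitian := by
  rw [outer_eq_vecMulVec, IsHermitian, conjTranspose_vecMulVec, star_star]

theorem IsUnitVec.trace_outer [Fintype γ] {ψ : γ → ℂ} (hψ : IsUnitVec ψ) :
    (outer ψ).trace = 1 := by
  rw [outer_eq_vecMulVec, trace_vecMulVec, dotProduct]
  simp only [Pi.star_apply, Complex.star_def, Complex.mul_conj]
  rw [← Complex.ofReal_sum, hψ, Complex.ofReal_one]

theorem IsUnitVec.norm_le_one [Fintype γ] {ψ : γ → ℂ} (hψ : IsUnitVec ψ) (x : γ) :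
    ‖ψ x‖ ≤ 1 := by
  have : ‖ψ x‖ ^ 2 ≤ 1 := by
    rw [Complex.sq_norm, ← hψ]
    exact Finset.single_le_sum (fun y _ => Complex.normSq_nonneg (ψ y)) (Finset.mem_univ x)
  exact (pow_le_one_iff_of_nonneg (norm_nonneg _) two_ne_zero).mp this

variable {α : Type*} [Fintype α] {k : ℕ}

theorem setOf_inSchmidtClass_eq_convexHull :
    {σ : Matrix (α × α) (α × α) ℂ | InSchmidtClass k σ} =
      convexHull ℝ (outer '' {ψ | IsUnitVec ψ ∧ schmidtRank ψ ≤ k}) := by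
  ext σ
  rw [mem_convexHull_iff_exists_fintype]
  constructor
  · rintro ⟨m, p, ψ, hp, hp₁, hψ, hrank, rfl⟩
    exact ⟨Fin m, inferInstance, p, fun i => outer (ψ i), hp, hp₁,
      fun i => ⟨ψ i, ⟨hψ i, hrank i⟩, rfl⟩, by simp only [Complex.coe_smul]⟩
  · rintro ⟨ι, _, w, z, hw, hw₁, hz, rfl⟩
    choose ψ hψ hψz using hz
    let e := (Fintype.equivFin ι).symm
    refine ⟨Fintype.card ι, w ∘ e, ψ ∘ e, fun i => hw _, ?_, fun i => (hψ _).1,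
      fun i => (hψ _).2, ?_⟩
    · exact (e.sum_comp w).trans hw₁
    · simp only [Function.comp_apply, Complex.coe_smul, hψz]
      exact (e.sum_comp _).symm

theorem InSchmidtClass.isHermitian {σ : Matrix (α × α) (α × α) ℂ} (hσ : InSchmidtClass k σ) :
    σ.IsHermitian := by
  obtain ⟨m, p, ψ, -, -, -, -, rfl⟩ := hσ
  exact isSelfAdjoint_sum _ fun i _ =>
    (isHermitian_outer (ψ i)).smul (Complex.conj_ofReal (p i))

theorem InSchmidtClass.trace_eq_one {σ : Matrix (α × α) (α × α) ℂ} (hσ : InSchmidtClass k σ) :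
    σ.trace = 1 := by
  obtain ⟨m, p, ψ, -, hp₁, hψ, -, rfl⟩ := hσ
  simp only [trace_sum, trace_smul, (hψ _).trace_outer, smul_eq_mul, mul_one]
  exact_mod_cast hp₁

theorem isCompact_setOf_isUnitVec_schmidtRank_le (k : ℕ) :
    IsCompact {ψ : α × α → ℂ | IsUnitVec ψ ∧ schmidtRank ψ ≤ k} := by
  refine Metric.isCompact_of_isClosed_isBounded ?_
    ((Metric.isBounded_closedBall (x := 0) (r := 1)).subset fun ψ hψ => ?_)
  · have hunit : IsClosed {ψ : α × α → ℂ | IsUnitVec ψ} :=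
      isClosed_eq
        (continuous_finsetSum _ fun x _ => Complex.continuous_normSq.comp (continuous_apply x))
        continuous_const
    have hmat : Continuous (matOfVec : (α × α → ℂ) → Matrix α α ℂ) :=
      continuous_matrix fun i j => continuous_apply (i, j)
    exact hunit.inter ((Matrix.isClosed_setOf_rank_le k).preimage hmat)
  · rw [mem_closedBall_zero_iff, pi_norm_le_iff_of_nonneg zero_le_one]
    exact hψ.1.norm_le_one

theorem isCompact_setOf_inSchmidtClass (k : ℕ) :
    IsCompact {σ : Matrix (α × α) (α × α) ℂ | InSchmidtClass k σ} := by
  rw [setOf_inSchmidtClass_eq_convexHull]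
  refine ((isCompact_setOf_isUnitVec_schmidtRank_le k).image ?_).convexHull_of_finiteDimensional
  exact continuous_matrix fun x y => (continuous_apply x).mul (continuous_apply y).star

theorem convex_setOf_inSchmidtClass (k : ℕ) :
    Convex ℝ {σ : Matrix (α × α) (α × α) ℂ | InSchmidtClass k σ} := by
  rw [setOf_inSchmidtClass_eq_convexHull]
  exact convex_convexHull ℝ _

end Schmidt

theorem exists_separating_hermitian_general {n k : ℕ}
    (ρ : Matrix (Fin n × Fin n) (Fin n × Fin n) ℂ)
    (hρ : ρ.PosSemidef) (hτ : ρ.trace = 1)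
    (hS : ¬ InSchmidtClass k ρ) :
    ∃ H : Matrix (Fin n × Fin n) (Fin n × Fin n) ℂ, H.IsHermitian ∧
      ((H * ρ).trace).im = 0 ∧ ((H * ρ).trace).re < 0 ∧
      ∀ σ : Matrix (Fin n × Fin n) (Fin n × Fin n) ℂ, InSchmidtClass k σ →
        ((H * σ).trace).im = 0 ∧ 0 ≤ ((H * σ).trace).re := by
  obtain ⟨f, u, hfρ, hfS⟩ := geometric_hahn_banach_point_closed (convex_setOf_inSchmidtClass k)
    (isCompact_setOf_inSchmidtClass k).isClosed hS
  obtain ⟨H₀, hH₀, hH₀f⟩ := exists_isHermitian_re_trace_mul_eq f.toLinearMap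
  have hH : (H₀ - (u : ℂ) • 1).IsHermitian :=
    hH₀.sub (isHermitian_one.smul (Complex.conj_ofReal u))
  have htrace : ∀ X, X.IsHermitian → X.trace = 1 →
      ((H₀ - (u : ℂ) • 1) * X).trace.re = f X - u := by
    intro X hX hX₁
    rw [sub_mul, trace_sub, smul_mul, one_mul, trace_smul, hX₁, Complex.sub_re, hH₀f X hX]
    simp
  refine ⟨H₀ - (u : ℂ) • 1, hH, hH.im_trace_mul_eq_zero hρ.isHermitian, ?_, fun σ hσ =>
    ⟨hH.im_trace_mul_eq_zero hσ.isHermitian, ?_⟩⟩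
  · rw [htrace ρ hρ.isHermitian hτ]
    linarith
  · rw [htrace σ hσ.isHermitian hσ.trace_eq_one]
    linarith [hfS σ hσ]

/-- If a density matrix `ρ` on `ℂ^n ⊗ ℂ^n` is not in `S_k`, then there is a
Hermitian matrix `H` with `Tr(Hρ) < 0` and `Tr(Hσ) ≥ 0` for every `σ ∈ S_k`. -/
theorem exists_separating_hermitian {n k : ℕ} (hk : 1 ≤ k)
    (ρ : Matrix (Fin n × Fin n) (Fin n × Fin n) ℂ)
    (hρ : ρ.PosSemidef) (hτ : ρ.trace = 1)
    (hS : ¬ InSchmidtClass k ρ) :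
    ∃ H : Matrix (Fin n × Fin n) (Fin n × Fin n) ℂ, H.IsHermitian ∧
      ((H * ρ).trace).im = 0 ∧ ((H * ρ).trace).re < 0 ∧
      ∀ σ : Matrix (Fin n × Fin n) (Fin n × Fin n) ℂ, InSchmidtClass k σ →
        ((H * σ).trace).im = 0 ∧ 0 ≤ ((H * σ).trace).re :=
  exists_separating_hermitian_general ρ hρ hτ hS
end

section
/- A linear Hermiticity-preserving map Λ : M_N(ℂ) → M_N(ℂ) is k-positive if and only if (1 ⊗ Λ)(|Ψ_k⟩⟨Ψ_k|) is positive semidefinite for every maximally entangled Schmidt-rank-k vector Ψ_k, i.e. every vector of the form Ψ_k = (1/√k) Σ_{i=1}^k a_i ⊗ b_i with {a_1,…,a_k} and {b_1,…,b_k} orthonormal families in ℂ^N. -/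
open Matrix BigOperators
open scoped ComplexOrder

/-- The maximally entangled Schmidt-rank-`k` vector `(1/√k) ∑ i, a i ⊗ b i`. -/
noncomputable def maxEntVec {N k : ℕ} (a b : Fin k → Fin N → ℂ) : Fin N × Fin N → ℂ :=
  fun x => ((Real.sqrt k : ℂ))⁻¹ * ∑ i, a i x.1 * b i x.2

/-- `v` is an orthonormal family. -/
def OrthonormalFam {N k : ℕ} (v : Fin k → Fin N → ℂ) : Prop :=
  ∀ i j, star (v i) ⬝ᵥ v j = if i = j then (1 : ℂ) else 0

/-!
A vector `ψ` of Schmidt rank at most `k` is a local image `(A ⊗ 1) Ψ_k` of a maximally entangled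
vector. Indeed, if the rows of `M_ψ` lie in the span of orthonormal vectors `c₁, …, c_k` (rows of
`C`), then `M_ψ = M_ψ C† C`, while `Ψ_k = k^{-1/2} ∑ i, c̄ᵢ ⊗ cᵢ` has matrix `k^{-1/2} C† C`; so
`ψ = (√k M_ψ ⊗ 1) Ψ_k`. As `1 ⊗ Λ` commutes with conjugation by `A ⊗ 1`, the matrix
`(1 ⊗ Λ)(|ψ⟩⟨ψ|) = (A ⊗ 1) (1 ⊗ Λ)(|Ψ_k⟩⟨Ψ_k|) (A ⊗ 1)†` is positive semidefinite.
-/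

open Module
open scoped Kronecker

theorem Submodule.exists_le_finrank_eq {K V : Type*} [DivisionRing K] [AddCommGroup V]
    [Module K V] [FiniteDimensional K V] (W : Submodule K V) {k : ℕ}
    (hWk : finrank K W ≤ k) (hk : k ≤ finrank K V) :
    ∃ W' : Submodule K V, W ≤ W' ∧ finrank K W' = k := by
  induction k, hWk using Nat.le_induction with
  | base => exact ⟨W, le_rfl, rfl⟩
  | succ k _ ih =>
    obtain ⟨W', hWW', hW'⟩ := ih (by omega)
    obtain ⟨v, hv⟩ := W'.exists_of_finrank_lt (by omega)
    have hv0 : v ≠ 0 := fun h => hv 1 one_ne_zero (by simp [h])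
    have hdisj : W' ⊓ K ∙ v = ⊥ := by
      refine (Submodule.eq_bot_iff _).2 fun x ⟨hxW, hxv⟩ => ?_
      obtain ⟨r, rfl⟩ := Submodule.mem_span_singleton.1 hxv
      by_contra hr
      exact hv r (by rintro rfl; simp at hr) hxW
    refine ⟨W' ⊔ K ∙ v, hWW'.trans le_sup_left, ?_⟩
    have := Submodule.finrank_sup_add_finrank_inf_eq W' (K ∙ v)
    rw [hdisj, finrank_bot, finrank_span_singleton hv0, hW'] at this
    omega

theorem Matrix.exists_orthonormal_rows_of_rank_le {𝕜 m n : Type*} [RCLike 𝕜] [Fintype m]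
    [Fintype n] (M : Matrix m n 𝕜) {k : ℕ} (hM : M.rank ≤ k) (hk : k ≤ Fintype.card n) :
    ∃ c : Fin k → n → 𝕜, of c * (of c)ᴴ = 1 ∧ M * (of c)ᴴ * of c = M := by
  let rows : m → EuclideanSpace 𝕜 n := fun x => WithLp.toLp 2 (M x)
  let W := Submodule.span 𝕜 (Set.range rows)
  have hW : finrank 𝕜 W ≤ k := by
    have : W = (Submodule.span 𝕜 (Set.range M.row)).map
        (WithLp.linearEquiv 2 𝕜 (n → 𝕜)).symm.toLinearMap := by
      rw [Submodule.map_span, ← Set.range_comp]; rfl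
    rwa [this, LinearEquiv.finrank_map_eq, ← rank_eq_finrank_span_row]
  obtain ⟨W', hWW', hW'⟩ := W.exists_le_finrank_eq hW (by simpa using hk)
  let b : OrthonormalBasis (Fin k) 𝕜 W' := (stdOrthonormalBasis 𝕜 W').reindex (finCongr hW')
  have inner_eq (u v : EuclideanSpace 𝕜 n) : inner 𝕜 u v = ∑ t, v t * starRingEnd 𝕜 (u t) := by
    simp [PiLp.inner_apply, RCLike.inner_apply]
  refine ⟨fun i => (b i : EuclideanSpace 𝕜 n), ?_, ?_⟩
  · ext i j
    have := orthonormal_iff_ite.1 b.orthonormal j i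
    rw [Submodule.coe_inner, inner_eq] at this
    simpa [mul_apply, one_apply, eq_comm] using this.symm
  · ext x y
    have hx : rows x ∈ W' := hWW' (Submodule.subset_span ⟨x, rfl⟩)
    have := congrArg (fun v : W' => (v : EuclideanSpace 𝕜 n) y) (b.sum_repr' ⟨rows x, hx⟩)
    simpa [mul_apply, inner_eq, Finset.sum_mul, rows] using this

section
variable {α β : Type*}

theorem matOfVec_injective : Function.Injective (matOfVec : (α × β → ℂ) → Matrix α β ℂ) :=
  fun _ _ h => funext fun p => congrFun₂ h p.1 p.2

theorem matOfVec_kronecker_one_mulVec {γ : Type*} [Fintype α] [Fintype β] [DecidableEq β]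
    (A : Matrix γ α ℂ) (ψ : α × β → ℂ) :
    matOfVec ((A ⊗ₖ (1 : Matrix β β ℂ)) *ᵥ ψ) = A * matOfVec ψ := by
  ext i j
  simp [matOfVec, mulVec, dotProduct, mul_apply, one_apply, Fintype.sum_prod_type]

end

theorem outer_mulVec {γ δ : Type*} [Fintype γ] (A : Matrix δ γ ℂ) (ψ : γ → ℂ) :
    outer (A *ᵥ ψ) = A * outer ψ * Aᴴ := by
  change vecMulVec _ (star _) = A * vecMulVec _ (star _) * Aᴴ
  rw [mul_vecMulVec, vecMulVec_mul, star_mulVec]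

theorem Matrix.kronecker_one_mul_mul_kronecker_one_apply {R γ γ' β : Type*} [Semiring R]
    [Fintype γ] [Fintype β] [DecidableEq β] (A : Matrix γ' γ R) (X : Matrix (γ × β) (γ × β) R)
    (B : Matrix γ γ' R) (i j : γ') (s t : β) :
    ((A ⊗ₖ (1 : Matrix β β R)) * X * (B ⊗ₖ (1 : Matrix β β R))) (i, s) (j, t) =
      ∑ l, ∑ l', A i l * X (l, s) (l', t) * B l' j := by
  simp only [mul_apply, kroneckerMap_apply, one_apply, mul_ite, mul_one, mul_zero, ite_mul,
    zero_mul, Fintype.sum_prod_type, Finset.sum_ite_eq, Finset.mem_univ, ↓reduceIte,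
    Finset.sum_mul, Finset.sum_ite_eq']
  exact Finset.sum_comm

theorem blockMap_kronecker_one_mul_mul {γ γ' : Type*} [Fintype γ] {n m : ℕ}
    (Λ : Matrix (Fin n) (Fin n) ℂ →ₗ[ℂ] Matrix (Fin m) (Fin m) ℂ) (A : Matrix γ' γ ℂ)
    (X : Matrix (γ × Fin n) (γ × Fin n) ℂ) (B : Matrix γ γ' ℂ) :
    blockMap Λ ((A ⊗ₖ (1 : Matrix (Fin n) (Fin n) ℂ)) * X * (B ⊗ₖ (1 : Matrix (Fin n) (Fin n) ℂ)))
      = (A ⊗ₖ (1 : Matrix (Fin m) (Fin m) ℂ)) * blockMap Λ X *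
        (B ⊗ₖ (1 : Matrix (Fin m) (Fin m) ℂ)) := by
  ext ⟨i, s⟩ ⟨j, t⟩
  have hblock : (of fun u v => ∑ l, ∑ l', A i l * X (l, u) (l', v) * B l' j) =
      ∑ l, ∑ l', (A i l * B l' j) • of fun u v => X (l, u) (l', v) := by
    ext u v
    simp only [of_apply, Matrix.sum_apply, Matrix.smul_apply, smul_eq_mul]
    exact Finset.sum_congr rfl fun _ _ => Finset.sum_congr rfl fun _ _ => by ring
  simp only [blockMap, of_apply, kronecker_one_mul_mul_kronecker_one_apply, hblock, map_sum,
    map_smul, Matrix.sum_apply, Matrix.smul_apply, smul_eq_mul]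
  exact Finset.sum_congr rfl fun _ _ => Finset.sum_congr rfl fun _ _ => by ring

theorem orthonormalFam_iff_mul_conjTranspose_eq_one {N k : ℕ} (v : Fin k → Fin N → ℂ) :
    OrthonormalFam v ↔ of v * (of v)ᴴ = 1 := by
  rw [← Matrix.ext_iff, OrthonormalFam, forall_comm]
  refine forall₂_congr fun j i => ?_
  simp [mul_apply, dotProduct, one_apply, mul_comm, eq_comm]

theorem OrthonormalFam.star {N k : ℕ} {v : Fin k → Fin N → ℂ} (hv : OrthonormalFam v) :
    OrthonormalFam fun i => star (v i) := by
  intro i j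
  rw [star_dotProduct_star, dotProduct_comm, hv]
  split_ifs <;> simp

theorem matOfVec_maxEntVec {N k : ℕ} (a b : Fin k → Fin N → ℂ) :
    matOfVec (maxEntVec a b) = (Real.sqrt k : ℂ)⁻¹ • ((of a)ᵀ * of b) := by
  ext x y
  simp [matOfVec, maxEntVec, mul_apply]

theorem isUnitVec_iff_trace {α β : Type*} [Fintype α] [Fintype β] (ψ : α × β → ℂ) :
    IsUnitVec ψ ↔ trace (matOfVec ψ * (matOfVec ψ)ᴴ) = 1 := by
  have : trace (matOfVec ψ * (matOfVec ψ)ᴴ) = ((∑ p, Complex.normSq (ψ p) : ℝ) : ℂ) := by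
    simp [trace, mul_apply, matOfVec, Fintype.sum_prod_type, Complex.mul_conj]
  rw [this, IsUnitVec]
  exact_mod_cast Iff.rfl

theorem isUnitVec_maxEntVec {N k : ℕ} (hk : k ≠ 0) {a b : Fin k → Fin N → ℂ}
    (ha : OrthonormalFam a) (hb : OrthonormalFam b) : IsUnitVec (maxEntVec a b) := by
  rw [orthonormalFam_iff_mul_conjTranspose_eq_one] at ha hb
  have hA : trace ((of a)ᵀ * (of a)ᵀᴴ) = k := by
    rw [trace_mul_comm, conjTranspose_transpose_eq_transpose_conjTranspose, ← transpose_mul,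
      trace_transpose, ha, trace_one, Fintype.card_fin]
  have hs : (Real.sqrt k : ℂ)⁻¹ * star (Real.sqrt k : ℂ)⁻¹ * k = 1 := by
    rw [star_inv₀, Complex.star_def, Complex.conj_ofReal, ← mul_inv, ← Complex.ofReal_mul,
      Real.mul_self_sqrt (Nat.cast_nonneg k), Complex.ofReal_natCast,
      inv_mul_cancel₀ (Nat.cast_ne_zero.2 hk)]
  rw [isUnitVec_iff_trace, matOfVec_maxEntVec, conjTranspose_smul, Matrix.smul_mul,
    Matrix.mul_smul, smul_smul, trace_smul, conjTranspose_mul, Matrix.mul_assoc,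
    ← Matrix.mul_assoc (of b), hb, Matrix.one_mul, hA, smul_eq_mul, hs]

theorem schmidtRank_maxEntVec_le {N k : ℕ} (a b : Fin k → Fin N → ℂ) :
    schmidtRank (maxEntVec a b) ≤ k := by
  rw [schmidtRank, matOfVec_maxEntVec, ← smul_mul]
  exact (rank_mul_le_right _ _).trans (rank_le_height _)

theorem kPositive_iff_maxEnt_general {N k : ℕ} (hk : 1 ≤ k) (hkN : k ≤ N)
    (Λ : Matrix (Fin N) (Fin N) ℂ →ₗ[ℂ] Matrix (Fin N) (Fin N) ℂ) :
    kPositive k (⇑Λ) ↔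
      ∀ a b : Fin k → Fin N → ℂ, OrthonormalFam a → OrthonormalFam b →
        (blockMap (⇑Λ) (outer (maxEntVec a b))).PosSemidef := by
  refine ⟨fun h a b ha hb => h _ (isUnitVec_maxEntVec (by omega) ha hb)
    (schmidtRank_maxEntVec_le a b), fun h ψ _ hψ => ?_⟩
  obtain ⟨c, hc, hMc⟩ :=
    exists_orthonormal_rows_of_rank_le (matOfVec ψ) hψ (by simpa using hkN)
  have hco : OrthonormalFam c := (orthonormalFam_iff_mul_conjTranspose_eq_one c).2 hc
  set A := (Real.sqrt k : ℂ) • matOfVec ψ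
  have hψA : ψ = (A ⊗ₖ (1 : Matrix (Fin N) (Fin N) ℂ)) *ᵥ maxEntVec (fun i => star (c i)) c := by
    apply matOfVec_injective
    have hsqrt : (Real.sqrt k : ℂ) ≠ 0 :=
      Complex.ofReal_ne_zero.2 (Real.sqrt_ne_zero'.2 (by exact_mod_cast hk))
    rw [matOfVec_kronecker_one_mulVec, matOfVec_maxEntVec, Matrix.smul_mul, Matrix.mul_smul,
      smul_smul, mul_inv_cancel₀ hsqrt, one_smul, ← Matrix.mul_assoc]
    exact hMc.symm
  rw [hψA, outer_mulVec, conjTranspose_kronecker, conjTranspose_one,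
    blockMap_kronecker_one_mul_mul]
  simpa only [conjTranspose_kronecker, conjTranspose_one] using
    (h _ _ hco.star hco).mul_mul_conjTranspose_same (A ⊗ₖ (1 : Matrix (Fin N) (Fin N) ℂ))

/-- A Hermiticity-preserving linear map `Λ` is `k`-positive iff
`(1 ⊗ Λ)(|Ψ_k⟩⟨Ψ_k|)` is positive semidefinite for every maximally entangled
Schmidt-rank-`k` vector `Ψ_k = (1/√k) ∑ i, a i ⊗ b i` with `a`, `b` orthonormal families. -/
theorem kPositive_iff_maxEnt {N k : ℕ} (hk : 1 ≤ k) (hkN : k ≤ N)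
    (Λ : Matrix (Fin N) (Fin N) ℂ →ₗ[ℂ] Matrix (Fin N) (Fin N) ℂ)
    (hherm : HermPreserving (⇑Λ)) :
    kPositive k (⇑Λ) ↔
      ∀ a b : Fin k → Fin N → ℂ, OrthonormalFam a → OrthonormalFam b →
        (blockMap (⇑Λ) (outer (maxEntVec a b))).PosSemidef :=
  kPositive_iff_maxEnt_general hk hkN Λ
end
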